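/- arXiv:1208.5703 — 3 statements merged into one kernel-verified Lean document; each statement's English description precedes it below -/
import Mathlib

section
/- Assume n ≥ 2, τ ≠ 0, p ≥ 0, all diagonal entries rᵢ of R are nonzero, and L·1ₙ = 0 (every row of L sums to zero). Then λ = 1 is a root of algebraic multiplicity exactly 2 of the characteristic polynomial of A if and only if κ₁ ≠ κ₂, p > 0, and 0 is a simple root (algebraic multiplicity 1) of the characteristic polynomial of L·R. -/
open Matrix Polynomial

/-- The 3n×3n transition matrix of the skewless clock-synchronization algorithm. -/
noncomputable def Amat (n : ℕ) (τ κ₁ κ₂ p : ℝ) (L R : Matrix (Fin n) (Fin n) ℝ) :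
    Matrix (Fin n ⊕ Fin n ⊕ Fin n) (Fin n ⊕ Fin n ⊕ Fin n) ℝ :=
  Matrix.fromBlocks 1 (Matrix.fromCols (τ • R) 0)
    (Matrix.fromRows ((-κ₁) • L) ((-p) • L))
    (Matrix.fromBlocks 1 ((-κ₂) • (1 : Matrix (Fin n) (Fin n) ℝ)) 0
      ((1 - p) • (1 : Matrix (Fin n) (Fin n) ℝ)))

/-!
Taking Schur complements of the scalar blocks of `λ • 1 - A` (first the top-left one, then the
bottom-right one) gives `charpoly A = det (f • 1 + g • L R)` with `f = (λ - 1)² (λ - 1 + p)` and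
`g = τ (κ₁ (λ - 1 + p) - κ₂ p)`: first for `λ ∉ {1, 1 - p}`, then everywhere. Over `ℂ` this
determinant is `∏ (f + ν g)` over the eigenvalues `ν` of `L R`. The factor of `ν = 0` is `f`,
vanishing to order `2` at `λ = 1`, or `3` if `p = 0`; a factor with `ν ≠ 0` takes the value
`ν τ p (κ₁ - κ₂)` at `1`. Since `L 1 = 0`, `0` is an eigenvalue of `L R`. Hence for `p ≠ 0` and
`κ₁ ≠ κ₂` the multiplicity of `1` is twice that of the eigenvalue `0`, while otherwise it is at
least `3`: for `κ₁ = κ₂` every factor vanishes at `1`, giving at least `2 + (n - 1)`.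
-/

namespace Matrix

variable {ι K : Type*} [Fintype ι] [DecidableEq ι]

theorem eval_det_smul_one_add_smul_map_C [CommRing K] (M : Matrix ι ι K) (f g : K[X]) (x : K) :
    (f • (1 : Matrix ι ι K[X]) + g • M.map C).det.eval x =
      (f.eval x • (1 : Matrix ι ι K) + g.eval x • M).det := by
  rw [← coe_evalRingHom, RingHom.map_det]
  congr 1
  ext i j
  by_cases h : i = j <;> simp [h]

theorem map_det_smul_one_add_smul_map_C [CommRing K] {S : Type*} [CommRing S] (φ : K →+* S)
    (M : Matrix ι ι K) (f g : K[X]) :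
    (f • (1 : Matrix ι ι K[X]) + g • M.map C).det.map φ =
      (f.map φ • (1 : Matrix ι ι S[X]) + g.map φ • (M.map φ).map C).det := by
  rw [← coe_mapRingHom, RingHom.map_det]
  congr 1
  ext i j
  by_cases h : i = j <;> simp [h]

theorem count_roots_charpoly_map {F : Type*} [CommRing K] [IsDomain K] [CommRing F] [IsDomain F]
    [DecidableEq F] (M : Matrix ι ι K) {φ : K →+* F} (hφ : Function.Injective φ) (a : K) :
    (M.map φ).charpoly.roots.count (φ a) = M.charpoly.rootMultiplicity a := by
  rw [count_roots, charpoly_map, ← eq_rootMultiplicity_map hφ]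

section Field

variable [Field K] {M : Matrix ι ι K}

theorem det_smul_one_add_smul_eq_prod_roots (hM : M.charpoly.Splits) (c d : K) :
    (c • (1 : Matrix ι ι K) + d • M).det = (M.charpoly.roots.map fun ν => c + d * ν).prod := by
  have hcard : M.charpoly.roots.card = Fintype.card ι := by
    rw [splits_iff_card_roots.mp hM, charpoly_natDegree_eq_dim]
  rcases eq_or_ne d 0 with rfl | hd
  · simp [hcard]
  have hscale : c • (1 : Matrix ι ι K) + d • M = (-d) • (scalar ι (-c / d) - M) := by
    rw [smul_sub, scalar_apply, ← smul_one_eq_diagonal, smul_smul]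
    field_simp
    module
  calc (c • (1 : Matrix ι ι K) + d • M).det
      = (M.charpoly.roots.map fun ν => -d * (-c / d - ν)).prod := by
        rw [hscale, det_smul, ← eval_charpoly, hM.eval_eq_prod_roots_of_monic M.charpoly_monic,
          Multiset.prod_map_mul, Multiset.map_const', Multiset.prod_replicate, hcard]
    _ = (M.charpoly.roots.map fun ν => c + d * ν).prod := by
        congr 1
        refine Multiset.map_congr rfl fun ν _ => ?_
        field_simp
        ring

theorem det_smul_one_add_smul_map_C_eq_prod_roots [Infinite K] (hM : M.charpoly.Splits)
    (f g : K[X]) :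
    (f • (1 : Matrix ι ι K[X]) + g • M.map C).det =
      (M.charpoly.roots.map fun ν => f + C ν * g).prod :=
  eq_of_infinite_eval_eq _ _ <| by
    simpa [eval_det_smul_one_add_smul_map_C, det_smul_one_add_smul_eq_prod_roots hM,
      eval_multiset_prod, Multiset.map_map, Function.comp_def, mul_comm] using Set.infinite_univ

variable {m : Type*} [Fintype m] [DecidableEq m]

theorem det_fromBlocks_smul_one₁₁ {a : K} (ha : a ≠ 0) (B : Matrix ι m K) (C : Matrix m ι K)
    (D : Matrix m m K) :
    (fromBlocks (a • 1) B C D).det = a ^ Fintype.card ι * (D - a⁻¹ • (C * B)).det := by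
  let : Invertible (a • (1 : Matrix ι ι K)) := ⟨a⁻¹ • 1, by simp [ha], by simp [ha]⟩
  rw [det_fromBlocks₁₁, det_smul, det_one, mul_one]
  congr 3
  change C * (a⁻¹ • 1) * B = _
  simp

theorem det_fromBlocks_smul_one₂₂ {b : K} (hb : b ≠ 0) (A : Matrix ι ι K) (B : Matrix ι m K)
    (C : Matrix m ι K) :
    (fromBlocks A B C (b • 1)).det = b ^ Fintype.card m * (A - b⁻¹ • (B * C)).det := by
  let : Invertible (b • (1 : Matrix m m K)) := ⟨b⁻¹ • 1, by simp [hb], by simp [hb]⟩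
  rw [det_fromBlocks₂₂, det_smul, det_one, mul_one]
  congr 3
  change B * (b⁻¹ • 1) * C = _
  simp

end Field

end Matrix

theorem Polynomial.rootMultiplicity_multiset_prod {R : Type*} [CommRing R] [IsDomain R]
    [DecidableEq R] {s : Multiset R[X]} (hs : (0 : R[X]) ∉ s) (a : R) :
    s.prod.rootMultiplicity a = (s.map (rootMultiplicity a)).sum := by
  simp [← count_roots, roots_multiset_prod s hs, Multiset.count_bind]

namespace Amat

variable {n : ℕ} (τ κ₁ κ₂ p : ℝ) (L R : Matrix (Fin n) (Fin n) ℝ)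

theorem smul_one_sub_eq_fromBlocks (x : ℝ) :
    x • (1 : Matrix (Fin n ⊕ Fin n ⊕ Fin n) (Fin n ⊕ Fin n ⊕ Fin n) ℝ) - Amat n τ κ₁ κ₂ p L R =
      fromBlocks ((x - 1) • 1) (fromCols ((-τ) • R) 0) (fromRows (κ₁ • L) (p • L))
        (fromBlocks ((x - 1) • 1) (κ₂ • (1 : Matrix (Fin n) (Fin n) ℝ)) 0 ((x - (1 - p)) • 1)) := by
  ext (i | i | i) (j | j | j) <;> simp [Amat, one_apply] <;> split_ifs <;> ring

theorem det_smul_one_sub {x : ℝ} (ha : x - 1 ≠ 0) (hb : x - (1 - p) ≠ 0) :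
    (x • (1 : Matrix (Fin n ⊕ Fin n ⊕ Fin n) (Fin n ⊕ Fin n ⊕ Fin n) ℝ) -
        Amat n τ κ₁ κ₂ p L R).det =
      (((x - 1) ^ 2 * (x - (1 - p))) • (1 : Matrix (Fin n) (Fin n) ℝ) +
        (τ * (κ₁ * (x - (1 - p)) - κ₂ * p)) • (L * R)).det := by
  set a := x - 1
  set b := x - (1 - p)
  have hschur : fromBlocks (a • 1) (κ₂ • (1 : Matrix (Fin n) (Fin n) ℝ)) 0 (b • 1) -
      a⁻¹ • (fromRows (κ₁ • L) (p • L) * fromCols ((-τ) • R) 0) =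
      fromBlocks (a • 1 + (a⁻¹ * τ * κ₁) • (L * R)) (κ₂ • (1 : Matrix (Fin n) (Fin n) ℝ))
        ((a⁻¹ * τ * p) • (L * R)) (b • 1) := by
    ext (i | i) (j | j) <;> simp <;> ring
  rw [smul_one_sub_eq_fromBlocks, det_fromBlocks_smul_one₁₁ ha, hschur,
    det_fromBlocks_smul_one₂₂ hb, ← mul_assoc, ← mul_pow, ← det_smul]
  congr 1
  simp only [smul_add, smul_sub, smul_smul, Matrix.smul_mul, Matrix.mul_smul, Matrix.one_mul]
  match_scalars <;> field_simp

noncomputable def scalarPoly (p : ℝ) : ℝ[X] := (X - C 1) ^ 2 * (X - C (1 - p))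

noncomputable def couplingPoly (τ κ₁ κ₂ p : ℝ) : ℝ[X] :=
  C τ * (C κ₁ * (X - C (1 - p)) - C (κ₂ * p))

theorem charpoly_eq :
    (Amat n τ κ₁ κ₂ p L R).charpoly =
      (scalarPoly p • (1 : Matrix (Fin n) (Fin n) ℝ[X]) +
        couplingPoly τ κ₁ κ₂ p • (L * R).map C).det := by
  refine eq_of_infinite_eval_eq _ _ <|
    ((Set.finite_singleton 1).union (Set.finite_singleton (1 - p))).infinite_compl.mono ?_
  intro x hx
  simp only [Set.mem_compl_iff, Set.mem_union, Set.mem_singleton_iff, not_or] at hx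
  have ha : x - 1 ≠ 0 := sub_ne_zero.mpr hx.1
  have hb : x - (1 - p) ≠ 0 := sub_ne_zero.mpr hx.2
  rw [Set.mem_ofPred_eq, eval_charpoly, scalar_apply, ← smul_one_eq_diagonal,
    det_smul_one_sub τ κ₁ κ₂ p L R ha hb, eval_det_smul_one_add_smul_map_C]
  simp [scalarPoly, couplingPoly]

noncomputable def eigenFactor (ν : ℂ) : ℂ[X] :=
  (scalarPoly p).map (algebraMap ℝ ℂ) + C ν * (couplingPoly τ κ₁ κ₂ p).map (algebraMap ℝ ℂ)

theorem map_charpoly_eq_prod_eigenFactor :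
    (Amat n τ κ₁ κ₂ p L R).charpoly.map (algebraMap ℝ ℂ) =
      (((L * R).map (algebraMap ℝ ℂ)).charpoly.roots.map (eigenFactor τ κ₁ κ₂ p)).prod := by
  rw [charpoly_eq, map_det_smul_one_add_smul_map_C,
    det_smul_one_add_smul_map_C_eq_prod_roots (IsAlgClosed.splits _)]
  rfl

theorem scalarPoly_monic : (scalarPoly p).Monic :=
  ((monic_X_sub_C 1).pow 2).mul (monic_X_sub_C _)

theorem eigenFactor_monic (ν : ℂ) : (eigenFactor τ κ₁ κ₂ p ν).Monic := by
  refine ((scalarPoly_monic p).map _).add_of_left ?_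
  have hdeg : (scalarPoly p).degree = 3 := by
    unfold scalarPoly
    compute_degree!
  rw [degree_map, hdeg]
  refine lt_of_le_of_lt ?_ (by norm_num : (1 : WithBot ℕ) < 3)
  simp only [couplingPoly, Polynomial.map_mul, Polynomial.map_sub, map_C, map_X]
  compute_degree

theorem eval_one_eigenFactor (ν : ℂ) :
    (eigenFactor τ κ₁ κ₂ p ν).eval 1 = ν * ((τ * p * (κ₁ - κ₂) : ℝ) : ℂ) := by
  simp only [eigenFactor, scalarPoly, couplingPoly, eval_add, eval_mul, eval_map_algebraMap]
  simp only [map_mul, map_sub, map_pow, aeval_X, aeval_C, eval_C, Complex.coe_algebraMap]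
  push_cast
  ring

theorem rootMultiplicity_one_eigenFactor_zero :
    (eigenFactor τ κ₁ κ₂ p 0).rootMultiplicity 1 = if p = 0 then 3 else 2 := by
  have hzero : eigenFactor τ κ₁ κ₂ p 0 = (scalarPoly p).map (algebraMap ℝ ℂ) := by
    simp [eigenFactor]
  have hroot : (1 : ℝ) = 1 - p ↔ p = 0 := by constructor <;> intro h <;> linarith
  rw [hzero, ← map_one (algebraMap ℝ ℂ), ← eq_rootMultiplicity_map (algebraMap ℝ ℂ).injective,
    scalarPoly, rootMultiplicity_mul (scalarPoly_monic p).ne_zero, rootMultiplicity_X_sub_C_pow,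
    rootMultiplicity_X_sub_C]
  simp only [hroot]
  split_ifs <;> rfl

theorem rootMultiplicity_one_eigenFactor_of_ne_zero {ν : ℂ} (hν : ν ≠ 0)
    (h : τ * p * (κ₁ - κ₂) ≠ 0) : (eigenFactor τ κ₁ κ₂ p ν).rootMultiplicity 1 = 0 :=
  rootMultiplicity_eq_zero <| by
    rw [IsRoot, eval_one_eigenFactor]
    exact mul_ne_zero hν (by exact_mod_cast h)

theorem one_le_rootMultiplicity_one_eigenFactor_self (κ : ℝ) (ν : ℂ) :
    1 ≤ (eigenFactor τ κ κ p ν).rootMultiplicity 1 :=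
  (rootMultiplicity_pos (eigenFactor_monic τ κ κ p ν).ne_zero).mpr <| by
    simp [IsRoot, eval_one_eigenFactor]

theorem rootMultiplicity_one_prod_eigenFactor (ρ : Multiset ℂ) :
    (ρ.map (eigenFactor τ κ₁ κ₂ p)).prod.rootMultiplicity 1 =
      (ρ.map fun ν => (eigenFactor τ κ₁ κ₂ p ν).rootMultiplicity 1).sum := by
  rw [rootMultiplicity_multiset_prod, Multiset.map_map]
  · rfl
  · simpa using fun ν _ => (eigenFactor_monic τ κ₁ κ₂ p ν).ne_zero

theorem three_le_rootMultiplicity_one_prod_eigenFactor {ρ : Multiset ℂ} (h0 : 0 ∈ ρ) :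
    3 ≤ (ρ.map (eigenFactor τ κ₁ κ₂ 0)).prod.rootMultiplicity 1 := by
  rw [rootMultiplicity_one_prod_eigenFactor]
  calc 3 = (eigenFactor τ κ₁ κ₂ 0 0).rootMultiplicity 1 := by
        simp [rootMultiplicity_one_eigenFactor_zero]
    _ ≤ _ := Multiset.le_sum_of_mem <|
        Multiset.mem_map_of_mem (fun ν => (eigenFactor τ κ₁ κ₂ 0 ν).rootMultiplicity 1) h0

theorem card_lt_rootMultiplicity_one_prod_eigenFactor_self (κ : ℝ) (hp : p ≠ 0)
    {ρ : Multiset ℂ} (h0 : 0 ∈ ρ) :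
    Multiset.card ρ < (ρ.map (eigenFactor τ κ κ p)).prod.rootMultiplicity 1 := by
  obtain ⟨ρ', rfl⟩ := Multiset.exists_cons_of_mem h0
  have hρ' :
      Multiset.card ρ' ≤ (ρ'.map fun ν => (eigenFactor τ κ κ p ν).rootMultiplicity 1).sum := by
    simpa using Multiset.card_nsmul_le_sum
      (s := ρ'.map fun ν => (eigenFactor τ κ κ p ν).rootMultiplicity 1) (a := 1) <| by
        simpa using fun ν _ => one_le_rootMultiplicity_one_eigenFactor_self τ p κ ν
  rw [rootMultiplicity_one_prod_eigenFactor, Multiset.map_cons, Multiset.sum_cons,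
    rootMultiplicity_one_eigenFactor_zero, if_neg hp, Multiset.card_cons]
  omega

theorem rootMultiplicity_one_prod_eigenFactor_eq_two_mul_count (ρ : Multiset ℂ) (hτ : τ ≠ 0)
    (hp : p ≠ 0) (hκ : κ₁ ≠ κ₂) :
    (ρ.map (eigenFactor τ κ₁ κ₂ p)).prod.rootMultiplicity 1 = 2 * ρ.count 0 := by
  have hcoupling : τ * p * (κ₁ - κ₂) ≠ 0 := mul_ne_zero (mul_ne_zero hτ hp) (sub_ne_zero.mpr hκ)
  rw [rootMultiplicity_one_prod_eigenFactor, Multiset.sum_map_eq_nsmul_single 0,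
    rootMultiplicity_one_eigenFactor_zero, if_neg hp, smul_eq_mul, mul_comm]
  exact fun ν hν _ => rootMultiplicity_one_eigenFactor_of_ne_zero τ κ₁ κ₂ p hν hcoupling

end Amat

theorem stmt2_general (n : ℕ) (hn : 2 ≤ n) (τ κ₁ κ₂ p : ℝ) (hτ : τ ≠ 0) (hp : 0 ≤ p)
    (L : Matrix (Fin n) (Fin n) ℝ)
    (R : Matrix (Fin n) (Fin n) ℝ)
    (hL1 : L *ᵥ (fun _ => (1 : ℝ)) = 0) :
    (Amat n τ κ₁ κ₂ p L R).charpoly.rootMultiplicity 1 = 2 ↔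
      (κ₁ ≠ κ₂ ∧ 0 < p ∧ (L * R).charpoly.rootMultiplicity 0 = 1) := by
  rw [eq_rootMultiplicity_map (algebraMap ℝ ℂ).injective, map_one,
    Amat.map_charpoly_eq_prod_eigenFactor]
  set ρ := ((L * R).map (algebraMap ℝ ℂ)).charpoly.roots
  have hcard : Multiset.card ρ = n := by
    rw [splits_iff_card_roots.mp (IsAlgClosed.splits _), charpoly_natDegree_eq_dim,
      Fintype.card_fin]
  have hzero : (0 : ℂ) ∈ ρ := by
    have hL : L.det = 0 := exists_mulVec_eq_zero_iff.mp
      ⟨_, fun h => one_ne_zero (congrFun h ⟨0, by omega⟩), hL1⟩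
    rw [← Multiset.prod_eq_zero_iff, ← det_eq_prod_roots_charpoly, ← RingHom.mapMatrix_apply,
      ← RingHom.map_det, det_mul, hL, zero_mul, map_zero]
  have hcount : ρ.count 0 = (L * R).charpoly.rootMultiplicity 0 := by
    rw [← count_roots_charpoly_map (L * R) (algebraMap ℝ ℂ).injective 0, map_zero]
  rw [← hcount]
  rcases hp.eq_or_lt with rfl | hp
  · have := Amat.three_le_rootMultiplicity_one_prod_eigenFactor τ κ₁ κ₂ hzero
    simp only [lt_self_iff_false, false_and, and_false, iff_false]
    omega
  rcases eq_or_ne κ₁ κ₂ with rfl | hκ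
  · have := Amat.card_lt_rootMultiplicity_one_prod_eigenFactor_self τ p κ₁ hp.ne' hzero
    simp only [ne_eq, not_true_eq_false, false_and, iff_false]
    omega
  · rw [Amat.rootMultiplicity_one_prod_eigenFactor_eq_two_mul_count τ κ₁ κ₂ p ρ hτ hp.ne' hκ]
    simp [hκ, hp]

/-- Lemma 1 of the paper: `λ = 1` is a root of algebraic multiplicity exactly 2 of the
characteristic polynomial of `A` iff `κ₁ ≠ κ₂`, `p > 0` and `0` is a simple root of the
characteristic polynomial of `L·R`. -/
theorem stmt2 (n : ℕ) (hn : 2 ≤ n) (τ κ₁ κ₂ p : ℝ) (hτ : τ ≠ 0) (hp : 0 ≤ p)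
    (L : Matrix (Fin n) (Fin n) ℝ) (r : Fin n → ℝ) (hr : ∀ i, r i ≠ 0)
    (R : Matrix (Fin n) (Fin n) ℝ) (hR : R = Matrix.diagonal r)
    (hL1 : L *ᵥ (fun _ => (1 : ℝ)) = 0) :
    (Amat n τ κ₁ κ₂ p L R).charpoly.rootMultiplicity 1 = 2 ↔
      (κ₁ ≠ κ₂ ∧ 0 < p ∧ (L * R).charpoly.rootMultiplicity 0 = 1) :=
  stmt2_general n hn τ κ₁ κ₂ p hτ hp L R hL1
end

section
/- Assume τ ≠ 0, p ≠ 0, κ₁ ≠ κ₂, all diagonal entries rᵢ of R are nonzero, and the kernel of L is exactly the span of 1ₙ (L·v = 0 implies v is a scalar multiple of 1ₙ, and L·1ₙ = 0). Then the kernel of A − I_{3n} is one-dimensional and is spanned by ζ₁ = (1ₙ; 0ₙ; 0ₙ); i.e., the eigenvalue 1 of A has geometric multiplicity one. -/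
/-!
Writing `z = (x, y, w)`, the equation `A z = z` splits into `τ R y = 0`, `κ₁ L x + κ₂ w = 0` and
`p (L x + w) = 0`. Since `R` is an invertible diagonal matrix, `y = 0`; the last two equations say
`L x = -w` and `(κ₂ - κ₁) w = 0`, so `w = 0` and `x ∈ ker L = span 1ₙ`.
-/

open Matrix

theorem Matrix.diagonal_mulVec_eq_zero_iff {m R : Type*} [Fintype m] [DecidableEq m]
    [Semiring R] [NoZeroDivisors R] {r y : m → R} (hr : ∀ i, r i ≠ 0) :
    diagonal r *ᵥ y = 0 ↔ y = 0 := by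
  simp only [funext_iff, mulVec_diagonal, Pi.zero_apply, mul_eq_zero]
  exact forall_congr' fun i => or_iff_right (hr i)

theorem eq_zero_and_eq_zero_of_smul_add_smul_eq_zero {K V : Type*} [Field K]
    [AddCommGroup V] [Module K V] {κ₁ κ₂ : K} (hκ : κ₁ ≠ κ₂) {a b : V}
    (h₁ : κ₁ • a + κ₂ • b = 0) (h₂ : a + b = 0) : a = 0 ∧ b = 0 := by
  have hb : (κ₂ - κ₁) • b = 0 := by linear_combination (norm := module) h₁ - κ₁ • h₂
  have hb0 : b = 0 := (smul_eq_zero.mp hb).resolve_left (sub_ne_zero.mpr hκ.symm)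
  exact ⟨by rwa [hb0, add_zero] at h₂, hb0⟩

theorem Amat_mulVec_sumElim (n : ℕ) (τ κ₁ κ₂ p : ℝ) (L R : Matrix (Fin n) (Fin n) ℝ)
    (x y w : Fin n → ℝ) :
    Amat n τ κ₁ κ₂ p L R *ᵥ Sum.elim x (Sum.elim y w) =
      Sum.elim (x + τ • R *ᵥ y) (Sum.elim (y - κ₁ • L *ᵥ x - κ₂ • w) (w - p • (L *ᵥ x + w))) := by
  rw [Amat, fromBlocks_mulVec, Sum.elim_comp_inl, Sum.elim_comp_inr, fromCols_mulVec_sumElim,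
    fromRows_mulVec, fromBlocks_mulVec, Sum.elim_comp_inl, Sum.elim_comp_inr]
  simp only [← Sum.elim_add_add, one_mulVec, zero_mulVec, add_zero, smul_mulVec]
  congr 2 <;> module

theorem Amat_mulVec_sumElim_eq_self_iff (n : ℕ) (τ κ₁ κ₂ p : ℝ) (L R : Matrix (Fin n) (Fin n) ℝ)
    (x y w : Fin n → ℝ) :
    Amat n τ κ₁ κ₂ p L R *ᵥ Sum.elim x (Sum.elim y w) = Sum.elim x (Sum.elim y w) ↔
      τ • R *ᵥ y = 0 ∧ κ₁ • L *ᵥ x + κ₂ • w = 0 ∧ p • (L *ᵥ x + w) = 0 := by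
  rw [Amat_mulVec_sumElim, Sum.elim_eq_iff, Sum.elim_eq_iff, add_eq_left, sub_sub, sub_eq_self,
    sub_eq_self]

theorem stmt6_general (n : ℕ) (τ κ₁ κ₂ p : ℝ)
    (hτ : τ ≠ 0) (hp : p ≠ 0) (hκ : κ₁ ≠ κ₂)
    (L : Matrix (Fin n) (Fin n) ℝ) (r : Fin n → ℝ) (hr : ∀ i, r i ≠ 0)
    (R : Matrix (Fin n) (Fin n) ℝ) (hR : R = Matrix.diagonal r)
    (hL1 : L *ᵥ (fun _ => (1 : ℝ)) = 0)
    (hker : ∀ v : Fin n → ℝ, L *ᵥ v = 0 → ∃ c : ℝ, v = fun _ => c) :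
    ∀ z : (Fin n ⊕ Fin n ⊕ Fin n) → ℝ,
      (Amat n τ κ₁ κ₂ p L R) *ᵥ z = z ↔
        ∃ c : ℝ, z = c • Sum.elim (fun _ => (1 : ℝ))
          (Sum.elim (fun _ => 0) (fun _ => 0)) := by
  intro z
  obtain ⟨x, y, w, rfl⟩ : ∃ x y w, z = Sum.elim x (Sum.elim y w) :=
    ⟨_, _, _, by rw [Sum.elim_comp_inl_inr, Sum.elim_comp_inl_inr]⟩
  have hζ (c : ℝ) : c • Sum.elim (fun _ : Fin n => (1 : ℝ))
      (Sum.elim (fun _ : Fin n => 0) fun _ : Fin n => 0) =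
        Sum.elim (fun _ => c) (Sum.elim 0 0) := by
    ext (i | i | i) <;> simp
  simp only [hζ, Sum.elim_eq_iff, Amat_mulVec_sumElim_eq_self_iff, hR,
    smul_eq_zero, hτ, hp, false_or, diagonal_mulVec_eq_zero_iff hr]
  constructor
  · rintro ⟨rfl, hx, hw⟩
    obtain ⟨hLx, rfl⟩ := eq_zero_and_eq_zero_of_smul_add_smul_eq_zero hκ hx hw
    obtain ⟨c, rfl⟩ := hker x hLx
    exact ⟨c, rfl, rfl, rfl⟩
  · rintro ⟨c, rfl, rfl, rfl⟩
    have hLc : L *ᵥ (fun _ => c) = 0 := by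
      rw [show (fun _ : Fin n => c) = c • fun _ => (1 : ℝ) by ext; simp, mulVec_smul, hL1,
        smul_zero]
    simp [hLc]

/-- The eigenvalue `1` of `A` has geometric multiplicity one: when `ker L = span{1ₙ}`,
`τ ≠ 0`, `p ≠ 0` and `κ₁ ≠ κ₂`, the kernel of `A − I₃ₙ` is exactly the span of
`ζ₁ = (1ₙ; 0; 0)`. -/
theorem stmt6 (n : ℕ) (hn : 1 ≤ n) (τ κ₁ κ₂ p : ℝ)
    (hτ : τ ≠ 0) (hp : p ≠ 0) (hκ : κ₁ ≠ κ₂)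
    (L : Matrix (Fin n) (Fin n) ℝ) (r : Fin n → ℝ) (hr : ∀ i, r i ≠ 0)
    (R : Matrix (Fin n) (Fin n) ℝ) (hR : R = Matrix.diagonal r)
    (hL1 : L *ᵥ (fun _ => (1 : ℝ)) = 0)
    (hker : ∀ v : Fin n → ℝ, L *ᵥ v = 0 → ∃ c : ℝ, v = fun _ => c) :
    ∀ z : (Fin n ⊕ Fin n ⊕ Fin n) → ℝ,
      (Amat n τ κ₁ κ₂ p L R) *ᵥ z = z ↔
        ∃ c : ℝ, z = c • Sum.elim (fun _ => (1 : ℝ))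
          (Sum.elim (fun _ => 0) (fun _ => 0)) :=
  stmt6_general n τ κ₁ κ₂ p hτ hp hκ L r hr R hR hL1 hker
end

section
/- Assume: (a) L·1ₙ = 0, the kernel of L is exactly the span of 1ₙ, and the first row of L is zero (node 1 is a leader with no neighbors); (b) all rᵢ > 0, τ > 0, p > 0, κ₁ ≠ κ₂; (c) 1 is an eigenvalue of A of algebraic multiplicity exactly 2 and every other complex eigenvalue of A has modulus < 1. Let the initial condition z₀ = (x⁰, s⁰, y⁰) satisfy s₁⁰ = 1/r₁ and y₁⁰ = 0. Then the trajectory z_k = A^k z₀ = (x_k, s_k, y_k) satisfies x_k − k·τ·1ₙ → x₁⁰·1ₙ as k → ∞; i.e., every clock converges to the leader's initial time advancing at the nominal rate (r* = 1 and x* = x₁⁰). -/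
open Matrix Polynomial Filter

open Finset Topology

/-!
The vector `u = (1, 0, 0)` is fixed by `A` because `L 1 = 0`, and `d = (x₁⁰ 1, (1 / rᵢ)ᵢ, 0)`
satisfies `A d = d + τ u`, so `A^k d = d + kτ u` is the nominal trajectory. The leader's rows of
`A` only see the leader's own coordinates (the first row of `L` vanishes and `R` is diagonal), so
the subspace `S` of states whose leader coordinates vanish is `A`-invariant, and the initial
condition says exactly that `z₀ - d ∈ S`. On `S` the value `1` is not an eigenvalue: a fixed
vector there has `s = 0` (as `τ rᵢ ≠ 0`), then `y = 0` (as `p ≠ 0` and `κ₁ ≠ κ₂`), then `L x = 0`,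
so `x` is constant and vanishes at the leader. Hence every eigenvalue of `A` on the
complexification of `S` has modulus `< 1`, and `A^k (z₀ - d) → 0`: on a generalized eigenspace,
`A^k` is a finite combination of the sequences `binom(k, i) μ^(k-i)`.
-/

theorem tendsto_natCast_choose_mul_pow {𝕜 : Type*} [RCLike 𝕜] {μ : 𝕜} (hμ : ‖μ‖ < 1) (m : ℕ) :
    Tendsto (fun k : ℕ => (k.choose m : 𝕜) * μ ^ (k - m)) atTop (𝓝 0) := by
  rcases eq_or_ne μ 0 with rfl | hμ0
  · refine tendsto_const_nhds.congr' ?_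
    filter_upwards [eventually_gt_atTop m] with k hk
    rw [zero_pow (Nat.sub_ne_zero_of_lt hk), mul_zero]
  have hchoose : Tendsto (fun k : ℕ => (k.choose m : 𝕜) * μ ^ k) atTop (𝓝 0) := by
    rw [tendsto_zero_iff_norm_tendsto_zero]
    refine squeeze_zero (fun _ => norm_nonneg _) (fun k => ?_)
      (tendsto_pow_const_mul_const_pow_of_lt_one m (norm_nonneg μ) hμ)
    rw [norm_mul, norm_pow, RCLike.norm_natCast]
    gcongr
    exact_mod_cast Nat.choose_le_pow k m
  simpa using (hchoose.mul_const (μ ^ m)⁻¹).congr' <| by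
    filter_upwards [eventually_ge_atTop m] with k hk
    rw [pow_sub₀ μ hμ0 hk, mul_assoc]

namespace Module.End

variable {𝕜 E : Type*} [RCLike 𝕜] [NormedAddCommGroup E] [NormedSpace 𝕜 E]

theorem tendsto_pow_apply_of_mem_maxGenEigenspace (f : End 𝕜 E) {μ : 𝕜} (hμ : ‖μ‖ < 1) {v : E}
    (hv : v ∈ f.maxGenEigenspace μ) : Tendsto (fun k => (f ^ k) v) atTop (𝓝 0) := by
  obtain ⟨m, hm⟩ := (mem_maxGenEigenspace f μ v).mp hv
  set N := f - μ • 1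
  have hcomm : Commute N (μ • 1) := (Commute.one_right N).smul_right μ
  have hexpand : ∀ k, m ≤ k →
      (f ^ k) v = ∑ i ∈ range m, ((k.choose i : 𝕜) * μ ^ (k - i)) • (N ^ i) v := by
    intro k hk
    have hbinom :
        (f ^ k) v = ∑ i ∈ range (k + 1), ((k.choose i : 𝕜) * μ ^ (k - i)) • (N ^ i) v := by
      rw [show f = N + μ • 1 by simp [N], hcomm.add_pow, LinearMap.sum_apply]
      refine sum_congr rfl fun i _ => ?_
      simp [_root_.smul_pow, mul_comm, mul_smul, Nat.cast_smul_eq_nsmul]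
    rw [hbinom]
    refine (sum_subset (range_subset_range.mpr (by omega)) fun i _ him => ?_).symm
    rw [mem_range, not_lt] at him
    rw [← Nat.sub_add_cancel him, pow_add, mul_apply, hm, map_zero, smul_zero]
  have hsum := tendsto_finsetSum (range m) fun i _ =>
    (tendsto_natCast_choose_mul_pow hμ i).smul_const ((N ^ i) v)
  simp only [zero_smul, sum_const_zero] at hsum
  refine hsum.congr' ?_
  filter_upwards [eventually_ge_atTop m] with k hk
  exact (hexpand k hk).symm

variable [IsAlgClosed 𝕜] [FiniteDimensional 𝕜 E] in
theorem tendsto_pow_apply_of_forall_hasEigenvalue (f : End 𝕜 E)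
    (hf : ∀ μ, f.HasEigenvalue μ → ‖μ‖ < 1) (v : E) :
    Tendsto (fun k => (f ^ k) v) atTop (𝓝 0) := by
  have hv : v ∈ ⨆ μ, f.maxGenEigenspace μ := by
    rw [iSup_maxGenEigenspace_eq_top]
    trivial
  induction hv using Submodule.iSup_induction' with
  | mem μ w hw =>
    rcases eq_or_ne w 0 with rfl | hw0
    · simp
    have hμ : f.HasEigenvalue μ :=
      HasUnifEigenvalue.lt zero_lt_one ((Submodule.ne_bot_iff _).mpr ⟨w, hw, hw0⟩)
    exact f.tendsto_pow_apply_of_mem_maxGenEigenspace (hf μ hμ) hw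
  | zero => simp
  | add w w' _ _ hw hw' => simpa using hw.add hw'

end Module.End

def Submodule.complexification {ι : Type*} (S : Submodule ℝ (ι → ℝ)) :
    Submodule ℂ (ι → ℂ) where
  carrier := {v | (fun i => (v i).re) ∈ S ∧ (fun i => (v i).im) ∈ S}
  add_mem' hv hw := by
    constructor
    · simpa only [Pi.add_def, Complex.add_re, Complex.add_im] using S.add_mem hv.1 hw.1
    · simpa only [Pi.add_def, Complex.add_re, Complex.add_im] using S.add_mem hv.2 hw.2
  zero_mem' := ⟨S.zero_mem, S.zero_mem⟩
  smul_mem' c v hv := by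
    constructor
    · simpa [Pi.add_def, Pi.smul_def, sub_eq_add_neg] using
        S.add_mem (S.smul_mem c.re hv.1) (S.smul_mem (-c.im) hv.2)
    · simpa [Pi.add_def, Pi.smul_def] using S.add_mem (S.smul_mem c.re hv.2) (S.smul_mem c.im hv.1)

namespace Matrix

variable {m ι : Type*} [Fintype ι]

theorem re_map_ofReal_mulVec (M : Matrix m ι ℝ) (v : ι → ℂ) :
    (fun i => ((M.map Complex.ofReal *ᵥ v) i).re) = M *ᵥ fun i => (v i).re := by
  ext i
  simp [mulVec, dotProduct, Complex.re_sum]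

theorem im_map_ofReal_mulVec (M : Matrix m ι ℝ) (v : ι → ℂ) :
    (fun i => ((M.map Complex.ofReal *ᵥ v) i).im) = M *ᵥ fun i => (v i).im := by
  ext i
  simp [mulVec, dotProduct, Complex.im_sum]

variable [DecidableEq ι]

theorem pow_mulVec_eq_add_smul {R : Type*} [CommRing R] {M : Matrix ι ι R} {u d : ι → R} {c : R}
    (hu : M *ᵥ u = u) (hd : M *ᵥ d = d + c • u) (k : ℕ) : M ^ k *ᵥ d = d + (k * c) • u := by
  induction k with
  | zero => simp
  | succ k ih =>
    rw [pow_succ', ← mulVec_mulVec, ih, mulVec_add, mulVec_smul, hd, hu]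
    push_cast
    module

theorem tendsto_pow_mulVec_of_mem (M : Matrix ι ι ℝ) (S : Submodule ℝ (ι → ℝ))
    (hMS : ∀ v ∈ S, M *ᵥ v ∈ S) (hfix : ∀ v ∈ S, M *ᵥ v = v → v = 0)
    (hspec : ∀ μ : ℂ, (M.map Complex.ofReal).charpoly.IsRoot μ → μ ≠ 1 → ‖μ‖ < 1)
    {w : ι → ℝ} (hw : w ∈ S) : Tendsto (fun k : ℕ => M ^ k *ᵥ w) atTop (𝓝 0) := by
  set V := S.complexification
  have hV : ∀ v ∈ V, toLin' (M.map Complex.ofReal) v ∈ V := fun v hv => by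
    refine ⟨?_, ?_⟩
    · simpa [re_map_ofReal_mulVec] using hMS _ hv.1
    · simpa [im_map_ofReal_mulVec] using hMS _ hv.2
  set g := (toLin' (M.map Complex.ofReal)).restrict hV
  have hg : ∀ μ, Module.End.HasEigenvalue g μ → ‖μ‖ < 1 := by
    intro μ hμ
    obtain ⟨v, hv, hv0⟩ := hμ.exists_hasEigenvector
    have hMv : M.map Complex.ofReal *ᵥ (v : ι → ℂ) = μ • v := by
      simpa [g] using congrArg Subtype.val (Module.End.mem_eigenspace_iff.mp hv)
    rcases eq_or_ne μ 1 with rfl | hμ1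
    · have hre := hfix _ v.2.1 (by rw [← re_map_ofReal_mulVec, hMv, one_smul])
      have him := hfix _ v.2.2 (by rw [← im_map_ofReal_mulVec, hMv, one_smul])
      exact (hv0 <| Subtype.ext <| funext fun i =>
        Complex.ext (congrFun hre i) (congrFun him i)).elim
    · refine hspec μ ?_ hμ1
      rw [← charpoly_toLin', ← Module.End.hasEigenvalue_iff_isRoot_charpoly]
      refine Module.End.hasEigenvalue_of_hasEigenvector (x := (v : ι → ℂ))
        ⟨?_, by simpa using hv0⟩
      simpa [Module.End.mem_eigenspace_iff] using hMv
  have hw' : (fun i => (w i : ℂ)) ∈ V :=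
    ⟨by simpa using hw, by simp only [Complex.ofReal_im]; exact S.zero_mem⟩
  have hpow : ∀ k, M ^ k *ᵥ w = fun i => (((g ^ k) ⟨_, hw'⟩ : ι → ℂ) i).re := by
    intro k
    have hmap : M.map Complex.ofReal ^ k = (M ^ k).map Complex.ofReal :=
      (Matrix.map_pow M Complex.ofRealHom k).symm
    rw [Module.End.pow_restrict, LinearMap.restrict_apply, Submodule.coe_mk, Submodule.coe_mk,
      ← toLin'_pow, toLin'_apply, hmap, re_map_ofReal_mulVec]
    simp
  have hre : Continuous fun v : V => fun i => ((v : ι → ℂ) i).re :=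
    continuous_pi fun i =>
      Complex.continuous_re.comp ((continuous_apply i).comp continuous_subtype_val)
  simpa [hpow, Function.comp_def, ← Pi.zero_def] using
    (hre.tendsto 0).comp (Module.End.tendsto_pow_apply_of_forall_hasEigenvalue g hg _)

end Matrix

theorem exists_eq_sumElim_sumElim {α β γ δ : Type*} (v : α ⊕ β ⊕ γ → δ) :
    ∃ x s y, v = Sum.elim x (Sum.elim s y) :=
  ⟨v ∘ .inl, v ∘ .inr ∘ .inl, v ∘ .inr ∘ .inr, by ext (i | i | i) <;> rfl⟩

section ClockSynchronization

variable {n : ℕ} {τ κ₁ κ₂ p : ℝ} {L : Matrix (Fin n) (Fin n) ℝ} {r : Fin n → ℝ}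

theorem Amat_mulVec (R : Matrix (Fin n) (Fin n) ℝ) (x s y : Fin n → ℝ) :
    Amat n τ κ₁ κ₂ p L R *ᵥ Sum.elim x (Sum.elim s y) =
      Sum.elim (x + τ • (R *ᵥ s))
        (Sum.elim (s - κ₁ • (L *ᵥ x) - κ₂ • y) ((1 - p) • y - p • (L *ᵥ x))) := by
  ext (i | i | i) <;>
    simp [Amat, fromBlocks_mulVec, fromRows_mulVec, smul_mulVec, neg_mulVec] <;> ring

def leaderSubspace (ℓ : Fin n) : Submodule ℝ (Fin n ⊕ Fin n ⊕ Fin n → ℝ) where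
  carrier := {v | v (.inl ℓ) = 0 ∧ v (.inr (.inl ℓ)) = 0 ∧ v (.inr (.inr ℓ)) = 0}
  add_mem' hv hw := by simp_all
  zero_mem' := by simp
  smul_mem' c v hv := by simp_all

theorem sumElim_mem_leaderSubspace {ℓ : Fin n} {x s y : Fin n → ℝ} :
    Sum.elim x (Sum.elim s y) ∈ leaderSubspace ℓ ↔ x ℓ = 0 ∧ s ℓ = 0 ∧ y ℓ = 0 :=
  Iff.rfl

theorem Amat_mulVec_mem_leaderSubspace {ℓ : Fin n} (hleader : ∀ j, L ℓ j = 0)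
    {v : Fin n ⊕ Fin n ⊕ Fin n → ℝ} (hv : v ∈ leaderSubspace ℓ) :
    Amat n τ κ₁ κ₂ p L (diagonal r) *ᵥ v ∈ leaderSubspace ℓ := by
  obtain ⟨x, s, y, rfl⟩ := exists_eq_sumElim_sumElim v
  obtain ⟨hx, hs, hy⟩ := sumElim_mem_leaderSubspace.mp hv
  have hLx : (L *ᵥ x) ℓ = 0 := by simp [mulVec, dotProduct, hleader]
  simp [Amat_mulVec, sumElim_mem_leaderSubspace, mulVec_diagonal, hx, hs, hy, hLx]

theorem eq_zero_of_Amat_mulVec_eq_self {ℓ : Fin n}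
    (hker : ∀ v : Fin n → ℝ, L *ᵥ v = 0 → ∃ c : ℝ, v = fun _ => c) (hr : ∀ i, r i ≠ 0)
    (hτ : τ ≠ 0) (hp : p ≠ 0) (hκ : κ₁ ≠ κ₂) {v : Fin n ⊕ Fin n ⊕ Fin n → ℝ}
    (hv : v ∈ leaderSubspace ℓ) (hfix : Amat n τ κ₁ κ₂ p L (diagonal r) *ᵥ v = v) : v = 0 := by
  obtain ⟨x, s, y, rfl⟩ := exists_eq_sumElim_sumElim v
  rw [Amat_mulVec] at hfix
  have hx i := congrFun hfix (.inl i)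
  have hs i := congrFun hfix (.inr (.inl i))
  have hy i := congrFun hfix (.inr (.inr i))
  simp only [Sum.elim_inl, Sum.elim_inr, Pi.add_apply, Pi.sub_apply, Pi.smul_apply, smul_eq_mul,
    mulVec_diagonal] at hx hs hy
  have hs0 : s = 0 := funext fun i => by simpa [hτ, hr i] using hx i
  have hy0 : y = 0 := funext fun i => by
    have : p * ((κ₁ - κ₂) * y i) = 0 := by linear_combination p * hs i - κ₁ * hy i
    simpa [hp, sub_ne_zero.mpr hκ] using this
  have hLx : L *ᵥ x = 0 := funext fun i => by simpa [hy0, hp] using hy i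
  obtain ⟨c, rfl⟩ := hker x hLx
  obtain rfl : c = 0 := (sumElim_mem_leaderSubspace.mp hv).1
  ext (i | i | i) <;> simp [hs0, hy0]

theorem Amat_mulVec_sumElim_const_inv (hL1 : L *ᵥ (fun _ => (1 : ℝ)) = 0) (hr : ∀ i, r i ≠ 0)
    (c : ℝ) :
    Amat n τ κ₁ κ₂ p L (diagonal r) *ᵥ Sum.elim (fun _ => c) (Sum.elim (fun i => (r i)⁻¹) 0) =
      Sum.elim (fun _ => c) (Sum.elim (fun i => (r i)⁻¹) 0) +
        τ • Sum.elim (fun _ => 1) (Sum.elim 0 0) := by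
  have hLc : L *ᵥ (fun _ => c) = 0 := by
    rw [show (fun _ => c) = c • fun _ : Fin n => (1 : ℝ) by ext; simp, mulVec_smul, hL1, smul_zero]
  ext (i | i | i) <;> simp [Amat_mulVec, hLc, mulVec_diagonal, hr i]

theorem Amat_mulVec_sumElim_one_zero (hL1 : L *ᵥ (fun _ => (1 : ℝ)) = 0) :
    Amat n τ κ₁ κ₂ p L (diagonal r) *ᵥ Sum.elim (fun _ => 1) (Sum.elim 0 0) =
      Sum.elim (fun _ => 1) (Sum.elim 0 0) := by
  rw [Amat_mulVec, hL1]
  ext (i | i | i) <;> simp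

end ClockSynchronization

theorem stmt9_general (n : ℕ) (hn : 0 < n) (τ κ₁ κ₂ p : ℝ)
    (L : Matrix (Fin n) (Fin n) ℝ) (r : Fin n → ℝ)
    (R : Matrix (Fin n) (Fin n) ℝ) (hR : R = Matrix.diagonal r)
    (hL1 : L *ᵥ (fun _ => (1 : ℝ)) = 0)
    (hker : ∀ v : Fin n → ℝ, L *ᵥ v = 0 → ∃ c : ℝ, v = fun _ => c)
    (hleader : ∀ j : Fin n, L ⟨0, hn⟩ j = 0)
    (hr : ∀ i, 0 < r i) (hτ : 0 < τ) (hp : 0 < p) (hκ : κ₁ ≠ κ₂)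
    (hspec : ∀ μ : ℂ, ((Amat n τ κ₁ κ₂ p L R).map Complex.ofReal).charpoly.IsRoot μ →
      μ ≠ 1 → ‖μ‖ < 1)
    (x0 s0 y0 : Fin n → ℝ)
    (hs0 : s0 ⟨0, hn⟩ = (r ⟨0, hn⟩)⁻¹) (hy0 : y0 ⟨0, hn⟩ = 0)
    (z : ℕ → (Fin n ⊕ Fin n ⊕ Fin n) → ℝ)
    (hz : ∀ k, z k = ((Amat n τ κ₁ κ₂ p L R) ^ k) *ᵥ Sum.elim x0 (Sum.elim s0 y0)) :
    Tendsto (fun k : ℕ => fun i : Fin n => z k (Sum.inl i) - (k : ℝ) * τ)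
      atTop (nhds fun _ => x0 ⟨0, hn⟩) := by
  subst hR
  set ℓ : Fin n := ⟨0, hn⟩
  set A := Amat n τ κ₁ κ₂ p L (diagonal r)
  have hr0 i : r i ≠ 0 := (hr i).ne'
  set d := Sum.elim (fun _ => x0 ℓ) (Sum.elim (fun i => (r i)⁻¹) 0)
  set w := Sum.elim x0 (Sum.elim s0 y0) - d
  have hw : w ∈ leaderSubspace ℓ := by simp [w, d, leaderSubspace, hs0, hy0]
  have hdecay : Tendsto (fun k : ℕ => A ^ k *ᵥ w) atTop (𝓝 0) :=
    A.tendsto_pow_mulVec_of_mem _ (fun _ => Amat_mulVec_mem_leaderSubspace hleader)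
      (fun _ => eq_zero_of_Amat_mulVec_eq_self hker hr0 hτ.ne' hp.ne' hκ) hspec hw
  have htraj k : z k = d + (k * τ) • Sum.elim (fun _ => 1) (Sum.elim 0 0) + A ^ k *ᵥ w := by
    rw [hz, ← pow_mulVec_eq_add_smul (Amat_mulVec_sumElim_one_zero hL1)
      (Amat_mulVec_sumElim_const_inv hL1 hr0 _),
      ← mulVec_add, add_sub_cancel]
  rw [tendsto_pi_nhds]
  intro i
  have := (((continuous_apply (Sum.inl i)).tendsto 0).comp hdecay).const_add (x0 ℓ)
  simpa [htraj, d, add_right_comm _ (_ * τ)] using this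

/-- Leader specialization of Theorem 1: if node 1 is a leader (first row of `L` is zero)
initialized with `s₁⁰ = 1/r₁` and `y₁⁰ = 0`, then every clock converges to the leader's
initial time advancing at the nominal rate (`r* = 1`, `x* = x₁⁰`). -/
theorem stmt9 (n : ℕ) (hn : 0 < n) (τ κ₁ κ₂ p : ℝ)
    (L : Matrix (Fin n) (Fin n) ℝ) (r : Fin n → ℝ)
    (R : Matrix (Fin n) (Fin n) ℝ) (hR : R = Matrix.diagonal r)
    (hL1 : L *ᵥ (fun _ => (1 : ℝ)) = 0)
    (hker : ∀ v : Fin n → ℝ, L *ᵥ v = 0 → ∃ c : ℝ, v = fun _ => c)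
    (hleader : ∀ j : Fin n, L ⟨0, hn⟩ j = 0)
    (hr : ∀ i, 0 < r i) (hτ : 0 < τ) (hp : 0 < p) (hκ : κ₁ ≠ κ₂)
    (hmult : Polynomial.rootMultiplicity (1 : ℂ)
      ((Amat n τ κ₁ κ₂ p L R).map Complex.ofReal).charpoly = 2)
    (hspec : ∀ μ : ℂ, ((Amat n τ κ₁ κ₂ p L R).map Complex.ofReal).charpoly.IsRoot μ →
      μ ≠ 1 → ‖μ‖ < 1)
    (x0 s0 y0 : Fin n → ℝ)
    (hs0 : s0 ⟨0, hn⟩ = (r ⟨0, hn⟩)⁻¹) (hy0 : y0 ⟨0, hn⟩ = 0)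
    (z : ℕ → (Fin n ⊕ Fin n ⊕ Fin n) → ℝ)
    (hz : ∀ k, z k = ((Amat n τ κ₁ κ₂ p L R) ^ k) *ᵥ Sum.elim x0 (Sum.elim s0 y0)) :
    Tendsto (fun k : ℕ => fun i : Fin n => z k (Sum.inl i) - (k : ℝ) * τ)
      atTop (nhds fun _ => x0 ⟨0, hn⟩) :=
  stmt9_general n hn τ κ₁ κ₂ p L r R hR hL1 hker hleader hr hτ hp hκ hspec x0 s0 y0 hs0 hy0 z hz
end
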